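/- arXiv:1812.02572 — 2 statements merged into one kernel-verified Lean document; each statement's English description precedes it below -/
import Mathlib

section
/- If a distance measure D satisfies the triangle inequality (D(ρ,σ) ≤ D(ρ,τ) + D(τ,σ) for all states τ) and the data processing inequality (D(N(ρ), N(σ)) ≤ D(ρ,σ) for every channel N), then for every channel N the resource generating power equals the resource increasing power: Ω_D(N) = Ω̃_D(N). -/
open scoped Kronecker ComplexOrder

variable {ι : Type*} [Fintype ι] [DecidableEq ι]

/-- A quantum state: positive semidefinite matrix of trace one. -/
def IsState (ρ : Matrix ι ι ℂ) : Prop := ρ.PosSemidef ∧ ρ.trace = 1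

/-- The action of `id_n ⊗ N` on block matrices. -/
def idTensorMap (n : ℕ) (N : Matrix ι ι ℂ →ₗ[ℂ] Matrix ι ι ℂ)
    (M : Matrix (Fin n × ι) (Fin n × ι) ℂ) : Matrix (Fin n × ι) (Fin n × ι) ℂ :=
  Matrix.of fun p q => N (Matrix.of fun k l => M (p.1, k) (q.1, l)) p.2 q.2

/-- A quantum channel: completely positive trace preserving linear map. -/
structure Channel (ι : Type*) [Fintype ι] [DecidableEq ι] where
  map : Matrix ι ι ℂ →ₗ[ℂ] Matrix ι ι ℂ
  cp : ∀ (n : ℕ) (M : Matrix (Fin n × ι) (Fin n × ι) ℂ), M.PosSemidef →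
        (idTensorMap n map M).PosSemidef
  tp : ∀ A : Matrix ι ι ℂ, (map A).trace = A.trace

/-- The trace norm ‖A‖₁ = Tr √(AᴴA). -/
noncomputable def traceNorm (A : Matrix ι ι ℂ) : ℝ :=
  ((Matrix.posSemidef_conjTranspose_mul_self A).1.eigenvectorUnitary.1 *
    Matrix.diagonal (((↑) : ℝ → ℂ) ∘ Real.sqrt ∘ (Matrix.posSemidef_conjTranspose_mul_self A).1.eigenvalues) *
    (star (Matrix.posSemidef_conjTranspose_mul_self A).1.eigenvectorUnitary : Matrix ι ι ℂ)).trace.re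

/-- Trace-norm resource measure ω₁. -/
noncomputable def omega1 (F : Set (Matrix ι ι ℂ)) (ρ : Matrix ι ι ℂ) : ℝ :=
  (1/2) * sInf ((fun σ => traceNorm (ρ - σ)) '' F)

/-- Trace-norm resource generating power Ω₁. -/
noncomputable def genPower1 (F : Set (Matrix ι ι ℂ)) (N : Matrix ι ι ℂ → Matrix ι ι ℂ) : ℝ :=
  sSup ((fun ρ => omega1 F (N ρ)) '' F)

/-- Trace-norm resource increasing power Ω̃₁. -/
noncomputable def incPower1 (F : Set (Matrix ι ι ℂ)) (N : Matrix ι ι ℂ → Matrix ι ι ℂ) : ℝ :=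
  sSup ((fun ρ => omega1 F (N ρ) - omega1 F ρ) '' {ρ | IsState ρ})

/-- Holevo–Helstrom success probability of discriminating two channels with probe `ρ`. -/
noncomputable def psuccPair (N M : Matrix ι ι ℂ → Matrix ι ι ℂ) (ρ : Matrix ι ι ℂ) : ℝ :=
  1/2 + (1/4) * traceNorm (N ρ - M ρ)

/-- Success probability of discriminating `N` from the set of channels `Free` with probe `ρ`. -/
noncomputable def psuccChan (N : Matrix ι ι ℂ → Matrix ι ι ℂ) (Free : Set (Channel ι))
    (ρ : Matrix ι ι ℂ) : ℝ :=
  sInf ((fun M : Channel ι => psuccPair N (⇑M.map) ρ) '' Free)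

/-- Maximum success probability of discriminating `N` from `Free` using probes from `F`. -/
noncomputable def psuccFF (N : Matrix ι ι ℂ → Matrix ι ι ℂ) (Free : Set (Channel ι))
    (F : Set (Matrix ι ι ℂ)) : ℝ :=
  sSup ((fun ρ => psuccChan N Free ρ) '' F)

/-- Resource measure induced by a distance measure `D`. -/
noncomputable def omegaD (D : Matrix ι ι ℂ → Matrix ι ι ℂ → ℝ) (F : Set (Matrix ι ι ℂ))
    (ρ : Matrix ι ι ℂ) : ℝ :=
  sInf ((fun σ => D ρ σ) '' F)

/-- Resource generating power induced by a distance measure `D`. -/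
noncomputable def genPowerD (D : Matrix ι ι ℂ → Matrix ι ι ℂ → ℝ) (F : Set (Matrix ι ι ℂ))
    (N : Matrix ι ι ℂ → Matrix ι ι ℂ) : ℝ :=
  sSup ((fun ρ => omegaD D F (N ρ)) '' F)

/-- Resource increasing power induced by a distance measure `D`. -/
noncomputable def incPowerD (D : Matrix ι ι ℂ → Matrix ι ι ℂ → ℝ) (F : Set (Matrix ι ι ℂ))
    (N : Matrix ι ι ℂ → Matrix ι ι ℂ) : ℝ :=
  sSup ((fun ρ => omegaD D F (N ρ) - omegaD D F ρ) '' {ρ | IsState ρ})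

/-
Free states carry no resource, so on `F` the increase `ω(N ρ) - ω ρ` is just `ω(N ρ)`; this
gives `Ω ≤ Ω̃`. Conversely, by the triangle inequality `ω` is 1-Lipschitz for `D`, and by data
processing `D (N ρ) (N σ) ≤ D ρ σ`; hence `ω(N ρ) ≤ D ρ σ + ω(N σ) ≤ D ρ σ + Ω` for every free
`σ`, and taking the infimum over `σ` gives `ω(N ρ) - ω ρ ≤ Ω` for every state `ρ`.
-/

lemma Channel.isState_map (N : Channel ι) {ρ : Matrix ι ι ℂ} (h : IsState ρ) :
    IsState (N.map ρ) := by
  refine ⟨?_, by rw [N.tp]; exact h.2⟩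
  -- Positivity is read off from complete positivity with a one-dimensional ancilla.
  have hcp := N.cp 1 _ (h.1.submatrix (Prod.snd : Fin 1 × ι → ι))
  exact hcp.submatrix (fun i : ι => ((0 : Fin 1), i))

/-- The bound is only needed for bounded `G`: otherwise both sides are the junk value `0`. -/
lemma Real.sSup_eq_sSup_of_subset {G I : Set ℝ} (hG : G.Nonempty) (hGI : G ⊆ I)
    (hI : BddAbove G → ∀ x ∈ I, x ≤ sSup G) : sSup G = sSup I := by
  by_cases hb : BddAbove G
  · exact le_antisymm (csSup_le_csSup ⟨sSup G, hI hb⟩ hG hGI) (csSup_le (hG.mono hGI) (hI hb))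
  · rw [Real.sSup_of_not_bddAbove hb,
      Real.sSup_of_not_bddAbove fun h => hb (h.mono hGI)]

section omegaD

variable {ι : Type*} [Fintype ι] {F : Set (Matrix ι ι ℂ)} {D : Matrix ι ι ℂ → Matrix ι ι ℂ → ℝ}

lemma omegaD_le (hFstate : ∀ ρ ∈ F, IsState ρ)
    (hDpos : ∀ ρ σ, IsState ρ → IsState σ → 0 ≤ D ρ σ)
    {ρ σ : Matrix ι ι ℂ} (hρ : IsState ρ) (hσ : σ ∈ F) : omegaD D F ρ ≤ D ρ σ :=
  csInf_le ⟨0, by rintro _ ⟨τ, hτ, rfl⟩; exact hDpos ρ τ hρ (hFstate τ hτ)⟩ ⟨σ, hσ, rfl⟩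

lemma omegaD_nonneg (hFne : F.Nonempty) (hFstate : ∀ ρ ∈ F, IsState ρ)
    (hDpos : ∀ ρ σ, IsState ρ → IsState σ → 0 ≤ D ρ σ)
    {ρ : Matrix ι ι ℂ} (hρ : IsState ρ) : 0 ≤ omegaD D F ρ :=
  le_csInf (hFne.image _) (by rintro _ ⟨σ, hσ, rfl⟩; exact hDpos ρ σ hρ (hFstate σ hσ))

lemma omegaD_eq_zero_of_mem (hFne : F.Nonempty) (hFstate : ∀ ρ ∈ F, IsState ρ)
    (hDpos : ∀ ρ σ, IsState ρ → IsState σ → 0 ≤ D ρ σ)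
    {ρ : Matrix ι ι ℂ} (hρ : ρ ∈ F) (hρρ : D ρ ρ = 0) : omegaD D F ρ = 0 :=
  le_antisymm (hρρ ▸ omegaD_le hFstate hDpos (hFstate ρ hρ) hρ)
    (omegaD_nonneg hFne hFstate hDpos (hFstate ρ hρ))

lemma omegaD_le_add_omegaD (hFne : F.Nonempty) (hFstate : ∀ ρ ∈ F, IsState ρ)
    (hDpos : ∀ ρ σ, IsState ρ → IsState σ → 0 ≤ D ρ σ)
    (hTri : ∀ ρ σ τ, IsState ρ → IsState σ → IsState τ → D ρ σ ≤ D ρ τ + D τ σ)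
    {ρ σ : Matrix ι ι ℂ} (hρ : IsState ρ) (hσ : IsState σ) :
    omegaD D F ρ ≤ D ρ σ + omegaD D F σ := by
  rw [← sub_le_iff_le_add']
  refine le_csInf (hFne.image _) ?_
  rintro _ ⟨τ, hτ, rfl⟩
  have := hTri ρ τ σ hρ (hFstate τ hτ) hσ
  linarith [omegaD_le hFstate hDpos hρ hτ]

lemma omegaD_map_sub_omegaD_le_genPowerD [DecidableEq ι] (N : Channel ι) (hFne : F.Nonempty)
    (hFstate : ∀ ρ ∈ F, IsState ρ) (hDpos : ∀ ρ σ, IsState ρ → IsState σ → 0 ≤ D ρ σ)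
    (hTri : ∀ ρ σ τ, IsState ρ → IsState σ → IsState τ → D ρ σ ≤ D ρ τ + D τ σ)
    (hDPI : ∀ ρ σ, IsState ρ → IsState σ → D (N.map ρ) (N.map σ) ≤ D ρ σ)
    (hbdd : BddAbove ((fun ρ => omegaD D F (N.map ρ)) '' F))
    {ρ : Matrix ι ι ℂ} (hρ : IsState ρ) :
    omegaD D F (N.map ρ) - omegaD D F ρ ≤ genPowerD D F N.map := by
  rw [sub_le_comm]
  refine le_csInf (hFne.image _) ?_
  rintro _ ⟨σ, hσ, rfl⟩
  have hσ' := hFstate σ hσ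
  calc omegaD D F (N.map ρ) - genPowerD D F N.map
      ≤ D (N.map ρ) (N.map σ) + omegaD D F (N.map σ) - genPowerD D F N.map := by
        gcongr
        exact omegaD_le_add_omegaD hFne hFstate hDpos hTri (N.isState_map hρ) (N.isState_map hσ')
    _ ≤ D ρ σ + genPowerD D F N.map - genPowerD D F N.map := by
        gcongr
        · exact hDPI ρ σ hρ hσ'
        · exact le_csSup hbdd ⟨σ, hσ, rfl⟩
    _ = D ρ σ := add_sub_cancel_right _ _

end omegaD

theorem stmt1_general
    (F : Set (Matrix ι ι ℂ)) (hFne : F.Nonempty) (hFstate : ∀ ρ ∈ F, IsState ρ)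
    (D : Matrix ι ι ℂ → Matrix ι ι ℂ → ℝ)
    (hDpos : ∀ ρ σ, IsState ρ → IsState σ → 0 ≤ D ρ σ)
    (hDzero : ∀ ρ σ, IsState ρ → IsState σ → (D ρ σ = 0 ↔ ρ = σ))
    (hTri : ∀ ρ σ τ, IsState ρ → IsState σ → IsState τ → D ρ σ ≤ D ρ τ + D τ σ)
    (hDPI : ∀ (M : Channel ι) (ρ σ : Matrix ι ι ℂ), IsState ρ → IsState σ →
      D (M.map ρ) (M.map σ) ≤ D ρ σ)
    (N : Channel ι) :
    genPowerD D F (⇑N.map) = incPowerD D F (⇑N.map) := by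
  refine Real.sSup_eq_sSup_of_subset (hFne.image _) ?_ ?_
  · rintro _ ⟨ρ, hρ, rfl⟩
    have hρ' := hFstate ρ hρ
    refine ⟨ρ, hρ', ?_⟩
    simp only [omegaD_eq_zero_of_mem hFne hFstate hDpos hρ ((hDzero ρ ρ hρ' hρ').2 rfl), sub_zero]
  · rintro hbdd _ ⟨ρ, hρ, rfl⟩
    exact omegaD_map_sub_omegaD_le_genPowerD N hFne hFstate hDpos hTri (hDPI N) hbdd hρ

/-- for a distance `D` satisfying the triangle inequality and the data processing
inequality, the resource generating power equals the resource increasing power. -/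
theorem stmt1
    (F : Set (Matrix ι ι ℂ)) (hFne : F.Nonempty) (hFstate : ∀ ρ ∈ F, IsState ρ)
    (hFconv : Convex ℝ F) (hFclosed : IsClosed F)
    (D : Matrix ι ι ℂ → Matrix ι ι ℂ → ℝ)
    (hDpos : ∀ ρ σ, IsState ρ → IsState σ → 0 ≤ D ρ σ)
    (hDzero : ∀ ρ σ, IsState ρ → IsState σ → (D ρ σ = 0 ↔ ρ = σ))
    (hTri : ∀ ρ σ τ, IsState ρ → IsState σ → IsState τ → D ρ σ ≤ D ρ τ + D τ σ)
    (hDPI : ∀ (M : Channel ι) (ρ σ : Matrix ι ι ℂ), IsState ρ → IsState σ →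
      D (M.map ρ) (M.map σ) ≤ D ρ σ)
    (N : Channel ι) :
    genPowerD D F (⇑N.map) = incPowerD D F (⇑N.map) :=
  stmt1_general F hFne hFstate D hDpos hDzero hTri hDPI N
end

section
/- Let 𝔍 be a set of channels on d×d matrices that contains, for every incoherent state σ, the replacement channel τ ↦ Tr(τ)σ (this holds for each of SIO, IO, DIO and MIO). If the discrimination measurement is restricted to incoherent POVMs, i.e. pairs {Π, I−Π} with Π diagonal in the standard basis and 0 ≤ Π ≤ I, then for every channel N and every state ρ the success probability of distinguishing N from 𝔍 equals that of random guessing: p^I_succ(N, 𝔍, ρ) := inf_{M∈𝔍} sup_{Π diagonal, 0≤Π≤I} [(1/2)·Tr(N(ρ)Π) + (1/2)·Tr(M(ρ)(I−Π))] = 1/2. -/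
open scoped Kronecker ComplexOrder

variable {ι : Type*} [Fintype ι] [DecidableEq ι]

/-- The set of incoherent states: states diagonal in the fixed (standard) basis. -/
def incoherentStates (d : ℕ) : Set (Matrix (Fin d) (Fin d) ℂ) :=
  {ρ | IsState ρ ∧ ρ.IsDiag}
/-- Success probability of discriminating `N` from the set `J`, with probe `ρ`, when the
measurement is restricted to incoherent (diagonal) two-outcome POVMs `{P, I - P}`. -/
noncomputable def psuccIncohPOVM {d : ℕ} (N : Matrix (Fin d) (Fin d) ℂ → Matrix (Fin d) (Fin d) ℂ)
    (J : Set (Channel (Fin d))) (ρ : Matrix (Fin d) (Fin d) ℂ) : ℝ :=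
  sInf ((fun M : Channel (Fin d) =>
    sSup ((fun P : Matrix (Fin d) (Fin d) ℂ =>
        (1/2) * ((N ρ * P).trace.re) + (1/2) * ((M.map ρ * (1 - P)).trace.re)) ''
      {P | P.IsDiag ∧ P.PosSemidef ∧ (1 - P).PosSemidef})) '' J)

/-!
Test `N` against the replacement channel onto the dephased output `diagonal (N ρ).diag`, which is
incoherent. A diagonal effect `P` only sees the diagonal of a state, so `Tr (N ρ * P)` equals
`Tr (diagonal (N ρ).diag * P)`, and every incoherent measurement scores exactly `1/2` against this
channel. Against any channel the trivial effect `P = 0` already scores `1/2`.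
-/

open scoped MatrixOrder

namespace Matrix

variable {𝕜 n : Type*} [RCLike 𝕜] [Fintype n]

theorem PosSemidef.trace_mul_nonneg [DecidableEq n] {A B : Matrix n n 𝕜} (hA : A.PosSemidef)
    (hB : B.PosSemidef) : 0 ≤ (A * B).trace := by
  have hsqrt : (CFC.sqrt A)ᴴ = CFC.sqrt A :=
    (nonneg_iff_posSemidef.mp (CFC.sqrt_nonneg A)).isHermitian
  have hconj : (A * B).trace = (CFC.sqrt A * B * (CFC.sqrt A)ᴴ).trace := by
    conv_lhs => rw [← CFC.sqrt_mul_sqrt_self A hA.nonneg]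
    rw [hsqrt, Matrix.mul_assoc, trace_mul_comm, Matrix.mul_assoc]
  rw [hconj]
  exact (hB.mul_mul_conjTranspose_same _).trace_nonneg

theorem trace_mul_add_trace_mul_one_sub [DecidableEq n] (A P : Matrix n n 𝕜) :
    (A * P).trace + (A * (1 - P)).trace = A.trace := by
  rw [← trace_add, ← Matrix.mul_add, add_sub_cancel, Matrix.mul_one]

theorem trace_mul_of_isDiag [DecidableEq n] (A : Matrix n n 𝕜) {P : Matrix n n 𝕜}
    (hP : P.IsDiag) : (A * P).trace = (diagonal A.diag * P).trace := by
  simp only [trace, diag_apply, mul_apply, diagonal_apply, ite_mul, zero_mul,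
    Finset.sum_ite_eq, Finset.mem_univ, if_true]
  refine Finset.sum_congr rfl fun i _ => Finset.sum_eq_single i (fun j _ hj => ?_) (by simp)
  rw [hP hj, mul_zero]

end Matrix

theorem IsState.diagonal_diag {A : Matrix ι ι ℂ} (hA : IsState A) :
    IsState (Matrix.diagonal A.diag) :=
  ⟨.diagonal fun i => hA.1.diag_nonneg (i := i), by rw [Matrix.trace_diagonal, ← hA.2]; rfl⟩

namespace Channel

theorem posSemidef_map (M : Channel ι) {ρ : Matrix ι ι ℂ} (hρ : ρ.PosSemidef) :
    (M.map ρ).PosSemidef := by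
  let block : Matrix (Fin 1 × ι) (Fin 1 × ι) ℂ := ρ.submatrix Prod.snd Prod.snd
  have hblock : M.map ρ = (idTensorMap 1 M.map block).submatrix (Prod.mk 0) (Prod.mk 0) := rfl
  rw [hblock]
  exact (M.cp 1 block (hρ.submatrix _)).submatrix _

theorem isState_map_s14 (M : Channel ι) {ρ : Matrix ι ι ℂ} (hρ : IsState ρ) :
    IsState (M.map ρ) :=
  ⟨M.posSemidef_map hρ.1, by rw [M.tp, hρ.2]⟩

end Channel

/-- Success probability of guessing `A` on outcome `P` and `B` on outcome `1 - P`, with equal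
priors. -/
noncomputable def guessingScore (A B P : Matrix ι ι ℂ) : ℝ :=
  (1/2) * (A * P).trace.re + (1/2) * (B * (1 - P)).trace.re

def incoherentEffects (d : ℕ) : Set (Matrix (Fin d) (Fin d) ℂ) :=
  {P | P.IsDiag ∧ P.PosSemidef ∧ (1 - P).PosSemidef}

theorem guessingScore_zero (A : Matrix ι ι ℂ) {B : Matrix ι ι ℂ} (hB : B.trace = 1) :
    guessingScore A B 0 = 1/2 := by
  simp [guessingScore, hB]

theorem guessingScore_self (A P : Matrix ι ι ℂ) : guessingScore A A P = (1/2) * A.trace.re := by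
  rw [guessingScore, ← mul_add, ← Complex.add_re, Matrix.trace_mul_add_trace_mul_one_sub]

theorem guessingScore_le_one {A B P : Matrix ι ι ℂ} (hA : IsState A) (hB : IsState B)
    (hP : P.PosSemidef) (h1P : (1 - P).PosSemidef) : guessingScore A B P ≤ 1 := by
  have hAsplit := congrArg Complex.re (A.trace_mul_add_trace_mul_one_sub P)
  have hBsplit := congrArg Complex.re (B.trace_mul_add_trace_mul_one_sub P)
  rw [Complex.add_re, hA.2, Complex.one_re] at hAsplit
  rw [Complex.add_re, hB.2, Complex.one_re] at hBsplit
  have hA1P : 0 ≤ (A * (1 - P)).trace.re := (Complex.nonneg_iff.mp (hA.1.trace_mul_nonneg h1P)).1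
  have hBP : 0 ≤ (B * P).trace.re := (Complex.nonneg_iff.mp (hB.1.trace_mul_nonneg hP)).1
  rw [guessingScore]
  linarith

theorem guessingScore_diagonal_diag {d : ℕ} {A P : Matrix (Fin d) (Fin d) ℂ} (hA : IsState A)
    (hP : P.IsDiag) : guessingScore A (Matrix.diagonal A.diag) P = 1/2 := by
  have hdephase : guessingScore A (Matrix.diagonal A.diag) P =
      guessingScore (Matrix.diagonal A.diag) (Matrix.diagonal A.diag) P := by
    rw [guessingScore, guessingScore, A.trace_mul_of_isDiag hP]
  rw [hdephase, guessingScore_self, hA.diagonal_diag.2, Complex.one_re, mul_one]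

theorem zero_mem_incoherentEffects (d : ℕ) : 0 ∈ incoherentEffects d :=
  ⟨Matrix.isDiag_zero, .zero, by simpa using Matrix.PosSemidef.one⟩

theorem half_le_sSup_guessingScore {d : ℕ} {A B : Matrix (Fin d) (Fin d) ℂ} (hA : IsState A)
    (hB : IsState B) : 1/2 ≤ sSup (guessingScore A B '' incoherentEffects d) := by
  refine le_csSup ⟨1, ?_⟩ ⟨0, zero_mem_incoherentEffects d, guessingScore_zero A hB.2⟩
  rintro _ ⟨P, ⟨-, hP, h1P⟩, rfl⟩
  exact guessingScore_le_one hA hB hP h1P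

theorem sSup_guessingScore_diagonal_diag {d : ℕ} {A : Matrix (Fin d) (Fin d) ℂ}
    (hA : IsState A) :
    sSup (guessingScore A (Matrix.diagonal A.diag) '' incoherentEffects d) = 1/2 := by
  refine IsGreatest.csSup_eq
    ⟨⟨0, zero_mem_incoherentEffects d, guessingScore_zero A hA.diagonal_diag.2⟩, ?_⟩
  rintro _ ⟨P, hP, rfl⟩
  exact (guessingScore_diagonal_diag hA hP.1).le

theorem psuccIncohPOVM_eq {d : ℕ} (N : Matrix (Fin d) (Fin d) ℂ → Matrix (Fin d) (Fin d) ℂ)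
    (J : Set (Channel (Fin d))) (ρ : Matrix (Fin d) (Fin d) ℂ) :
    psuccIncohPOVM N J ρ =
      sInf ((fun M : Channel (Fin d) =>
        sSup (guessingScore (N ρ) (M.map ρ) '' incoherentEffects d)) '' J) :=
  rfl

/-- with incoherent POVMs, the success probability of distinguishing any channel
from a set of channels containing all incoherent replacement channels is that of random
guessing, `1/2`. -/
theorem stmt14 {d : ℕ} (J : Set (Channel (Fin d)))
    (hRepl : ∀ σ ∈ incoherentStates d, ∃ M ∈ J,
      ∀ τ : Matrix (Fin d) (Fin d) ℂ, M.map τ = τ.trace • σ)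
    (N : Channel (Fin d)) (ρ : Matrix (Fin d) (Fin d) ℂ) (hρ : IsState ρ) :
    psuccIncohPOVM (⇑N.map) J ρ = 1/2 := by
  have hNρ : IsState (N.map ρ) := N.isState_map_s14 hρ
  obtain ⟨M, hMJ, hM⟩ := hRepl _ ⟨hNρ.diagonal_diag, Matrix.isDiag_diagonal _⟩
  have hMρ : M.map ρ = Matrix.diagonal (N.map ρ).diag := by rw [hM, hρ.2, one_smul]
  rw [psuccIncohPOVM_eq]
  refine IsLeast.csInf_eq ⟨⟨M, hMJ, ?_⟩, ?_⟩
  · simpa only [hMρ] using sSup_guessingScore_diagonal_diag hNρ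
  · rintro _ ⟨M', -, rfl⟩
    exact half_le_sSup_guessingScore hNρ (M'.isState_map_s14 hρ)
end
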